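/- arXiv:2406.03584 — 3 statements merged into one kernel-verified Lean document; each statement's English description precedes it below -/
import Mathlib

section
/- Let f_6 : Z^9 -> Z^2 be given by the matrix [[0, -4, 20, -30, 8, 12, 4, -12, -20], [36, -34, 26, -3, -4, -6, 16, 6, -8]]. Then the cokernel of f_6 has order 36. -/
private def gaux : (Fin 2 → ℤ) →ₗ[ℤ] ZMod 36 where
  toFun v := ((v 0 + 2 * v 1 : ℤ) : ZMod 36)
  map_add' v w := by push_cast; simp [Pi.add_apply]; ring
  map_smul' c v := by push_cast; simp [Pi.smul_apply, smul_eq_mul]; ring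

private lemma gaux_surj : Function.Surjective gaux := by
  intro x
  obtain ⟨n, rfl⟩ := ZMod.intCast_surjective (n := 36) x
  exact ⟨![n, 0], by simp [gaux]⟩

private lemma range_eq :
    LinearMap.range (Matrix.toLin'
        (!![0, -4, 20, -30, 8, 12, 4, -12, -20; 36, -34, 26, -3, -4, -6, 16, 6, -8] :
          Matrix (Fin 2) (Fin 9) ℤ)) = LinearMap.ker gaux := by
  apply le_antisymm
  · rw [LinearMap.range_le_ker_iff]
    apply Module.Basis.ext (Pi.basisFun ℤ (Fin 9))
    intro i
    fin_cases i <;>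
      · simp [gaux, Matrix.toLin'_apply, Matrix.mulVec, dotProduct,
          Fin.sum_univ_succ, Pi.single_apply]
        decide
  · intro v hv
    rw [LinearMap.mem_ker] at hv
    simp only [gaux, LinearMap.coe_mk, AddHom.coe_mk] at hv
    have hdvd : ((36 : ℕ) : ℤ) ∣ v 0 + 2 * v 1 :=
      (ZMod.intCast_zmod_eq_zero_iff_dvd _ 36).mp hv
    obtain ⟨k, hk⟩ := hdvd
    set M := (!![0, -4, 20, -30, 8, 12, 4, -12, -20; 36, -34, 26, -3, -4, -6, 16, 6, -8] :
          Matrix (Fin 2) (Fin 9) ℤ)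
    have h1 : (![2, -1] : Fin 2 → ℤ) ∈ LinearMap.range (Matrix.toLin' M) := by
      refine ⟨![0, 0, -2, -1, 0, 0, 3, 0, 0], ?_⟩
      funext i
      fin_cases i <;>
        simp [M, Matrix.toLin'_apply, Matrix.mulVec, dotProduct, Fin.sum_univ_succ]
    have h2 : (![0, 18] : Fin 2 → ℤ) ∈ LinearMap.range (Matrix.toLin' M) := by
      refine ⟨![-1, -3, 0, 0, 0, 0, -3, 0, 0], ?_⟩
      funext i
      fin_cases i <;>
        simp [M, Matrix.toLin'_apply, Matrix.mulVec, dotProduct, Fin.sum_univ_succ]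
    have hv' : v = (18 * k - v 1) • (![2, -1] : Fin 2 → ℤ) + k • (![0, 18] : Fin 2 → ℤ) := by
      funext i
      fin_cases i <;> simp [Pi.smul_apply, smul_eq_mul] <;> omega
    rw [hv']
    exact add_mem (Submodule.smul_mem _ _ h1) (Submodule.smul_mem _ _ h2)

/-- The cokernel of the map `f₆ : ℤ⁹ → ℤ²` given by the matrix
`[[0, -4, 20, -30, 8, 12, 4, -12, -20], [36, -34, 26, -3, -4, -6, 16, 6, -8]]`
has order `36`. -/
theorem stmt_3 :
    Nat.card ((Fin 2 → ℤ) ⧸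
      LinearMap.range (Matrix.toLin'
        (!![0, -4, 20, -30, 8, 12, 4, -12, -20; 36, -34, 26, -3, -4, -6, 16, 6, -8] :
          Matrix (Fin 2) (Fin 9) ℤ))) = 36 := by
  rw [range_eq]
  have := (gaux.quotKerEquivOfSurjective gaux_surj).toEquiv
  rw [Nat.card_congr this]
  simp [Nat.card_eq_fintype_card]
end

section
/- Let R = Z[c_1, c_2, c_3] / I, where I is generated by the degree 2k components of (1 + c_1 + c_2 + c_3)(1 - c_1 + c_2 - c_3) for k = 1, 2, 3 (i.e. by c_1^2 - 2c_2, c_2^2 - 2c_1c_3, c_3^2), graded by deg c_i = 2i. Then the eight monomials 1, c_1, c_2, c_3, c_1 c_2, c_1 c_3, c_2 c_3, c_1 c_2 c_3 form a Z-basis of R. -/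
/-!
Reading the relations as rewriting rules `c₁² ↦ 2c₂`, `c₂² ↦ 2c₁c₃`, `c₃² ↦ 0` (their leading
monomials are pairwise coprime), every monomial reduces to a multiple of a squarefree one, so the
eight squarefree monomials span `R`. For independence, the coordinates of the normal forms define a
`ℤ`-linear map `ℤ[c₁, c₂, c₃] → ℤ⁸`; it is compatible with the three rewriting rules, hence kills
the ideal, and it sends the squarefree monomials to the standard basis.
-/

open MvPolynomial

noncomputable def lgrIdeal : Ideal (MvPolynomial (Fin 3) ℤ) :=
  Ideal.span {X 0 ^ 2 - 2 * X 1, X 1 ^ 2 - 2 * X 0 * X 2, X 2 ^ 2}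

theorem MvPolynomial.linearMap_eq_zero_of_mem_span {σ R M : Type*} [CommSemiring R]
    [AddCommMonoid M] [Module R M] (φ : MvPolynomial σ R →ₗ[R] M)
    {s : Set (MvPolynomial σ R)} (hs : ∀ d, ∀ r ∈ s, φ (monomial d 1 * r) = 0)
    {p : MvPolynomial σ R} (hp : p ∈ Ideal.span s) : φ p = 0 := by
  suffices ∀ q, φ (q * p) = 0 by simpa using this 1
  induction hp using Submodule.span_induction with
  | mem r hr =>
    intro q
    induction q using MvPolynomial.induction_on' with
    | monomial d a =>
      rw [show monomial d a = a • monomial d 1 by rw [smul_monomial, smul_eq_mul, mul_one],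
        smul_mul_assoc, map_smul, hs d r hr, smul_zero]
    | add q₁ q₂ h₁ h₂ => rw [add_mul, map_add, h₁, h₂, add_zero]
  | zero => simp
  | add x y _ _ hx hy => intro q; rw [mul_add, map_add, hx, hy, add_zero]
  | smul a x _ hx => intro q; rw [smul_eq_mul, ← mul_assoc, hx]

theorem Ideal.Quotient.linearIndependent_mk_of_coords {R A ι : Type*} [CommRing R]
    [CommRing A] [Algebra R A] [Fintype ι] [DecidableEq ι] {I : Ideal A} {v : ι → A}
    (φ : A →ₗ[R] ι → R) (hI : ∀ p ∈ I, φ p = 0) (hv : ∀ i, φ (v i) = Pi.single i 1) :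
    LinearIndependent R (Ideal.Quotient.mk I ∘ v) := by
  rw [Fintype.linearIndependent_iff]
  intro g hg
  have hmem : ∑ i, g i • v i ∈ I := by
    rw [← Ideal.Quotient.eq_zero_iff_mem, ← Ideal.Quotient.mkₐ_eq_mk R, map_sum]
    simpa only [map_smul, Function.comp_apply, Ideal.Quotient.mkₐ_eq_mk] using hg
  simpa [hv, Pi.single_apply] using congrFun (hI _ hmem)

namespace LagrangianGrassmannian

noncomputable def chernMonomial (a b c : ℕ) : MvPolynomial (Fin 3) ℤ :=
  X 0 ^ a * X 1 ^ b * X 2 ^ c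

theorem monomial_one_eq_chernMonomial (d : Fin 3 →₀ ℕ) :
    monomial d 1 = chernMonomial (d 0) (d 1) (d 2) := by
  rw [monomial_eq, C_1, one_mul, Finsupp.prod_fintype _ _ (fun _ => pow_zero _),
    Fin.prod_univ_three, chernMonomial]

theorem chernMonomial_mul_relation₁ (a b c : ℕ) :
    chernMonomial a b c * (X 0 ^ 2 - 2 * X 1) =
      chernMonomial (a + 2) b c - (2 : ℤ) • chernMonomial a (b + 1) c := by
  simp only [chernMonomial]; ring

theorem chernMonomial_mul_relation₂ (a b c : ℕ) :
    chernMonomial a b c * (X 1 ^ 2 - 2 * X 0 * X 2) =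
      chernMonomial a (b + 2) c - (2 : ℤ) • chernMonomial (a + 1) b (c + 1) := by
  simp only [chernMonomial]; ring

theorem chernMonomial_mul_relation₃ (a b c : ℕ) :
    chernMonomial a b c * X 2 ^ 2 = chernMonomial a b (c + 2) := by
  simp only [chernMonomial]; ring

def squarefreeExponents : Fin 8 → ℕ × ℕ × ℕ :=
  ![(0, 0, 0), (1, 0, 0), (0, 1, 0), (0, 0, 1), (1, 1, 0), (1, 0, 1), (0, 1, 1), (1, 1, 1)]

noncomputable def squarefreeMonomial (i : Fin 8) : MvPolynomial (Fin 3) ℤ :=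
  chernMonomial (squarefreeExponents i).1 (squarefreeExponents i).2.1 (squarefreeExponents i).2.2

theorem squarefreeMonomial_eq :
    squarefreeMonomial =
      ![1, X 0, X 1, X 2, X 0 * X 1, X 0 * X 2, X 1 * X 2, X 0 * X 1 * X 2] := by
  ext i : 1
  fin_cases i <;> simp [squarefreeMonomial, squarefreeExponents, chernMonomial]

theorem mk_chernMonomial_c₁_sq (a b c : ℕ) :
    Ideal.Quotient.mk lgrIdeal (chernMonomial (a + 2) b c) =
      (2 : ℤ) • Ideal.Quotient.mk lgrIdeal (chernMonomial a (b + 1) c) := by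
  rw [← map_zsmul, Ideal.Quotient.mk_eq_mk_iff_sub_mem, ← chernMonomial_mul_relation₁]
  exact Ideal.mul_mem_left _ _ (Ideal.subset_span (by simp))

theorem mk_chernMonomial_c₂_sq (a b c : ℕ) :
    Ideal.Quotient.mk lgrIdeal (chernMonomial a (b + 2) c) =
      (2 : ℤ) • Ideal.Quotient.mk lgrIdeal (chernMonomial (a + 1) b (c + 1)) := by
  rw [← map_zsmul, Ideal.Quotient.mk_eq_mk_iff_sub_mem, ← chernMonomial_mul_relation₂]
  exact Ideal.mul_mem_left _ _ (Ideal.subset_span (by simp))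

theorem mk_chernMonomial_c₃_sq (a b c : ℕ) :
    Ideal.Quotient.mk lgrIdeal (chernMonomial a b (c + 2)) = 0 := by
  rw [Ideal.Quotient.eq_zero_iff_mem, ← chernMonomial_mul_relation₃]
  exact Ideal.mul_mem_left _ _ (Ideal.subset_span (by simp))

theorem mk_chernMonomial_mem_span (a b c : ℕ) :
    Ideal.Quotient.mk lgrIdeal (chernMonomial a b c) ∈
      Submodule.span ℤ (Set.range (Ideal.Quotient.mk lgrIdeal ∘ squarefreeMonomial)) := by
  by_cases ha : 2 ≤ a
  · obtain ⟨a, rfl⟩ := Nat.exists_eq_add_of_le' ha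
    rw [mk_chernMonomial_c₁_sq]
    exact Submodule.smul_mem _ _ (mk_chernMonomial_mem_span a (b + 1) c)
  by_cases hb : 2 ≤ b
  · obtain ⟨b, rfl⟩ := Nat.exists_eq_add_of_le' hb
    rw [mk_chernMonomial_c₂_sq]
    exact Submodule.smul_mem _ _ (mk_chernMonomial_mem_span (a + 1) b (c + 1))
  by_cases hc : 2 ≤ c
  · obtain ⟨c, rfl⟩ := Nat.exists_eq_add_of_le' hc
    rw [mk_chernMonomial_c₃_sq]
    exact zero_mem _
  obtain ⟨i, hi⟩ : ∃ i, squarefreeExponents i = (a, b, c) := by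
    interval_cases a <;> interval_cases b <;> interval_cases c <;> decide
  exact Submodule.subset_span ⟨i, by simp [squarefreeMonomial, hi]⟩
termination_by a + b

theorem span_mk_squarefreeMonomial :
    ⊤ ≤ Submodule.span ℤ (Set.range (Ideal.Quotient.mk lgrIdeal ∘ squarefreeMonomial)) := by
  rintro x -
  obtain ⟨p, rfl⟩ := Ideal.Quotient.mk_surjective x
  induction p using MvPolynomial.induction_on' with
  | monomial d a =>
    rw [show monomial d a = a • monomial d 1 by rw [smul_monomial, smul_eq_mul, mul_one],
      map_zsmul, monomial_one_eq_chernMonomial]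
    exact Submodule.smul_mem _ _ (mk_chernMonomial_mem_span _ _ _)
  | add p q hp hq => rw [map_add]; exact add_mem hp hq

/-- The coordinates of `c₁ᵃ c₂ᵇ c₃ᶜ` in the squarefree basis, listed for `c ≤ 1` and weighted
degree `a + 2b + 3c ≤ 6`; all other monomials vanish in `R`. -/
def coordsTable : ℕ → ℕ → ℕ → Fin 8 → ℤ
  | 0, 0, 0 => Pi.single 0 1
  | 1, 0, 0 => Pi.single 1 1
  | 2, 0, 0 => Pi.single 2 2
  | 3, 0, 0 => Pi.single 4 2
  | 4, 0, 0 => Pi.single 5 8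
  | 5, 0, 0 => Pi.single 6 16
  | 6, 0, 0 => Pi.single 7 16
  | 0, 1, 0 => Pi.single 2 1
  | 1, 1, 0 => Pi.single 4 1
  | 2, 1, 0 => Pi.single 5 4
  | 3, 1, 0 => Pi.single 6 8
  | 4, 1, 0 => Pi.single 7 8
  | 0, 2, 0 => Pi.single 5 2
  | 1, 2, 0 => Pi.single 6 4
  | 2, 2, 0 => Pi.single 7 4
  | 0, 3, 0 => Pi.single 7 2
  | 0, 0, 1 => Pi.single 3 1
  | 1, 0, 1 => Pi.single 5 1
  | 2, 0, 1 => Pi.single 6 2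
  | 3, 0, 1 => Pi.single 7 2
  | 0, 1, 1 => Pi.single 6 1
  | 1, 1, 1 => Pi.single 7 1
  | _, _, _ => 0

-- The explicit degree bound turns the compatibility checks below into finitely many cases.
def coords (a b c : ℕ) : Fin 8 → ℤ :=
  if a + 2 * b + 3 * c ≤ 6 then coordsTable a b c else 0

theorem coords_c₁_sq (a b c : ℕ) : coords (a + 2) b c = (2 : ℤ) • coords a (b + 1) c := by
  by_cases h : a + 2 * b + 3 * c ≤ 4
  · have ha : a ≤ 4 := by omega
    have hb : b ≤ 2 := by omega
    have hc : c ≤ 1 := by omega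
    interval_cases a <;> interval_cases b <;> interval_cases c <;> decide
  · simp only [coords, if_neg (show ¬a + 2 + 2 * b + 3 * c ≤ 6 by omega),
      if_neg (show ¬a + 2 * (b + 1) + 3 * c ≤ 6 by omega), smul_zero]

theorem coords_c₂_sq (a b c : ℕ) :
    coords a (b + 2) c = (2 : ℤ) • coords (a + 1) b (c + 1) := by
  by_cases h : a + 2 * b + 3 * c ≤ 2
  · have ha : a ≤ 2 := by omega
    have hb : b ≤ 1 := by omega
    obtain rfl : c = 0 := by omega
    interval_cases a <;> interval_cases b <;> decide
  · simp only [coords, if_neg (show ¬a + 2 * (b + 2) + 3 * c ≤ 6 by omega),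
      if_neg (show ¬a + 1 + 2 * b + 3 * (c + 1) ≤ 6 by omega), smul_zero]

theorem coords_c₃_sq (a b c : ℕ) : coords a b (c + 2) = 0 := by
  by_cases h : a + 2 * b + 3 * c = 0
  · obtain ⟨rfl, rfl, rfl⟩ : a = 0 ∧ b = 0 ∧ c = 0 := by omega
    decide
  · simp only [coords, if_neg (show ¬a + 2 * b + 3 * (c + 2) ≤ 6 by omega)]

theorem coords_squarefreeExponents (i : Fin 8) :
    coords (squarefreeExponents i).1 (squarefreeExponents i).2.1 (squarefreeExponents i).2.2 =
      Pi.single i 1 := by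
  revert i; decide

noncomputable def coordMap : MvPolynomial (Fin 3) ℤ →ₗ[ℤ] Fin 8 → ℤ :=
  (basisMonomials (Fin 3) ℤ).constr ℤ fun d => coords (d 0) (d 1) (d 2)

theorem coordMap_chernMonomial (a b c : ℕ) : coordMap (chernMonomial a b c) = coords a b c := by
  set d : Fin 3 →₀ ℕ := Finsupp.single 0 a + Finsupp.single 1 b + Finsupp.single 2 c
  have hd : chernMonomial a b c = chernMonomial (d 0) (d 1) (d 2) := by simp [d]
  rw [hd, ← monomial_one_eq_chernMonomial]
  change coordMap (basisMonomials (Fin 3) ℤ d) = _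
  rw [coordMap, Module.Basis.constr_basis]
  simp [d]

theorem coordMap_eq_zero_of_mem {p : MvPolynomial (Fin 3) ℤ} (hp : p ∈ lgrIdeal) :
    coordMap p = 0 := by
  refine MvPolynomial.linearMap_eq_zero_of_mem_span coordMap (fun d r hr => ?_) hp
  rw [monomial_one_eq_chernMonomial]
  rcases hr with rfl | rfl | rfl
  · rw [chernMonomial_mul_relation₁, map_sub, map_smul, coordMap_chernMonomial,
      coordMap_chernMonomial, coords_c₁_sq, sub_self]
  · rw [chernMonomial_mul_relation₂, map_sub, map_smul, coordMap_chernMonomial,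
      coordMap_chernMonomial, coords_c₂_sq, sub_self]
  · rw [chernMonomial_mul_relation₃, coordMap_chernMonomial, coords_c₃_sq]

theorem linearIndependent_mk_squarefreeMonomial :
    LinearIndependent ℤ (Ideal.Quotient.mk lgrIdeal ∘ squarefreeMonomial) :=
  Ideal.Quotient.linearIndependent_mk_of_coords coordMap (fun _ => coordMap_eq_zero_of_mem)
    fun i => by rw [squarefreeMonomial, coordMap_chernMonomial, coords_squarefreeExponents]

end LagrangianGrassmannian

/-- In `R = ℤ[c₁,c₂,c₃]/(c₁² - 2c₂, c₂² - 2c₁c₃, c₃²)` the eight monomials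
`1, c₁, c₂, c₃, c₁c₂, c₁c₃, c₂c₃, c₁c₂c₃` form a `ℤ`-basis. -/
theorem stmt_12 :
    ∃ b : Module.Basis (Fin 8) ℤ (MvPolynomial (Fin 3) ℤ ⧸ lgrIdeal),
      ∀ i : Fin 8, b i = Ideal.Quotient.mk lgrIdeal
        (![1, X 0, X 1, X 2, X 0 * X 1, X 0 * X 2, X 1 * X 2, X 0 * X 1 * X 2] i) :=
  ⟨.mk LagrangianGrassmannian.linearIndependent_mk_squarefreeMonomial
      LagrangianGrassmannian.span_mk_squarefreeMonomial, fun i => by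
    rw [Module.Basis.mk_apply, Function.comp_apply, LagrangianGrassmannian.squarefreeMonomial_eq]⟩
end

section
/- Let R = Z[e_1, e_2, e_3, e_4] / J, where J is generated by the relations e_{2k} + sum_{i=1}^{2k-1} (-1)^i e_i e_{2k-i} = 0 for k = 1, 2, 3, 4 (with e_i = 0 for i >= 5). Then the 16 square-free monomials e_{i_1} ... e_{i_r} with 1 <= i_1 < ... < i_r <= 4 (including 1) form a Z-basis of R. -/
/-!
The sixteen classes `m_k` of the square-free monomials span `R`: the rewriting rules
`e₁² = e₂`, `e₂² = 2e₁e₃ - e₄`, `e₃² = 2e₂e₄`, `e₄² = 0` coming from the relations write every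
product `eᵢ m_k` as an integral combination of the `m_j`, so their span contains `1` and is
stable under multiplication by the generators, hence is all of `R`. They are independent because
the matrices of these multiplication tables commute and satisfy the relations, so `R` acts on
`ℤ¹⁶`; under this action `m_k` sends the first standard basis vector to the `k`-th one.
-/

open MvPolynomial

/-- The ideal of relations in the cohomology ring of `OGr₊(5,10)`: for `k = 1,2,3,4`,
the relation `e_{2k} + ∑_{i=1}^{2k-1} (-1)^i eᵢ e_{2k-i} = 0` (with `eᵢ = 0` for `i ≥ 5`),
i.e. generated by `e₂ - e₁²`, `e₄ - e₁e₃ + e₂² - e₃e₁`, `e₂e₄ - e₃² + e₄e₂`, `e₄²`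
in `ℤ[e₁, e₂, e₃, e₄]` (with `eᵢ = X (i-1)`). -/
noncomputable def ogrIdeal : Ideal (MvPolynomial (Fin 4) ℤ) :=
  Ideal.span
    {X 1 - X 0 * X 0,
     X 3 - X 0 * X 2 + X 1 * X 1 - X 2 * X 0,
     X 1 * X 3 - X 2 * X 2 + X 3 * X 1,
     X 3 * X 3}

theorem Submodule.span_range_eq_top_of_mul_mem {R A ι : Type*} [CommSemiring R] [Semiring A]
    [Algebra R A] {s : Set A} (hs : Algebra.adjoin R s = ⊤) {b : ι → A}
    (h1 : 1 ∈ span R (Set.range b)) (hmul : ∀ x ∈ s, ∀ i, x * b i ∈ span R (Set.range b)) :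
    span R (Set.range b) = ⊤ := by
  set W := span R (Set.range b)
  have hgen : ∀ x ∈ s, ∀ w ∈ W, x * w ∈ W := by
    intro x hx w hw
    induction hw using span_induction with
    | mem y hy => obtain ⟨i, rfl⟩ := hy; exact hmul x hx i
    | zero => simp
    | add y z _ _ hy hz => simpa [mul_add] using W.add_mem hy hz
    | smul r y _ hy => simpa [mul_smul_comm] using W.smul_mem r hy
  have hadjoin : ∀ a ∈ Algebra.adjoin R s, ∀ w ∈ W, a * w ∈ W := by
    intro a ha
    induction ha using Algebra.adjoin_induction with
    | mem x hx => exact hgen x hx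
    | algebraMap r =>
      intro w hw
      simpa [Algebra.algebraMap_eq_smul_one, smul_mul_assoc] using W.smul_mem r hw
    | add x y _ _ hx hy => intro w hw; simpa [add_mul] using W.add_mem (hx w hw) (hy w hw)
    | mul x y _ _ hx hy => intro w hw; simpa [mul_assoc] using hx _ (hy w hw)
  rw [eq_top_iff]
  rintro a -
  simpa using hadjoin a (hs ▸ Algebra.mem_top) 1 h1

theorem MvPolynomial.adjoin_range_comp_X_eq_top {σ R A : Type*} [CommSemiring R] [Semiring A]
    [Algebra R A] {f : MvPolynomial σ R →ₐ[R] A} (hf : Function.Surjective f) :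
    Algebra.adjoin R (Set.range (f ∘ X)) = ⊤ := by
  rw [Set.range_comp, Algebra.adjoin_image, adjoin_range_X, Algebra.map_top,
    (AlgHom.range_eq_top f).mpr hf]

local notation "𝓡" => MvPolynomial (Fin 4) ℤ ⧸ ogrIdeal

noncomputable def ogrMonomial : Fin 16 → MvPolynomial (Fin 4) ℤ :=
  ![1, X 0, X 1, X 2, X 3,
    X 0 * X 1, X 0 * X 2, X 0 * X 3, X 1 * X 2, X 1 * X 3, X 2 * X 3,
    X 0 * X 1 * X 2, X 0 * X 1 * X 3, X 0 * X 2 * X 3, X 1 * X 2 * X 3,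
    X 0 * X 1 * X 2 * X 3]

/-- The multiplication table of `𝓡`: column `k` of `mulMatrix i` holds the coordinates of
`X i * ogrMonomial k` in the monomial basis. -/
def mulMatrix : Fin 4 → Matrix (Fin 16) (Fin 16) ℤ :=
  ![!![ 0,  0,  0,  0,  0,  0,  0,  0,  0,  0,  0,  0,  0,  0,  0,  0;
        1,  0,  0,  0,  0,  0,  0,  0,  0,  0,  0,  0,  0,  0,  0,  0;
        0,  1,  0,  0,  0,  0,  0,  0,  0,  0,  0,  0,  0,  0,  0,  0;
        0,  0,  0,  0,  0,  0,  0,  0,  0,  0,  0,  0,  0,  0,  0,  0;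
        0,  0,  0,  0,  0, -1,  0,  0,  0,  0,  0,  0,  0,  0,  0,  0;
        0,  0,  1,  0,  0,  0,  0,  0,  0,  0,  0,  0,  0,  0,  0,  0;
        0,  0,  0,  1,  0,  2,  0,  0,  0,  0,  0,  0,  0,  0,  0,  0;
        0,  0,  0,  0,  1,  0,  0,  0,  0,  0,  0,  0,  0,  0,  0,  0;
        0,  0,  0,  0,  0,  0,  1,  0,  0,  0,  0,  0,  0,  0,  0,  0;
        0,  0,  0,  0,  0,  0,  0,  1,  0,  0,  0,  0,  0,  0,  0,  0;
        0,  0,  0,  0,  0,  0,  0,  0,  0,  0,  0, -1,  0,  0,  0,  0;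
        0,  0,  0,  0,  0,  0,  0,  0,  1,  0,  0,  0,  0,  0,  0,  0;
        0,  0,  0,  0,  0,  0,  0,  0,  0,  1,  0,  4,  0,  0,  0,  0;
        0,  0,  0,  0,  0,  0,  0,  0,  0,  0,  1,  0,  2,  0,  0,  0;
        0,  0,  0,  0,  0,  0,  0,  0,  0,  0,  0,  0,  0,  1,  0,  0;
        0,  0,  0,  0,  0,  0,  0,  0,  0,  0,  0,  0,  0,  0,  1,  0],
    !![ 0,  0,  0,  0,  0,  0,  0,  0,  0,  0,  0,  0,  0,  0,  0,  0;
        0,  0,  0,  0,  0,  0,  0,  0,  0,  0,  0,  0,  0,  0,  0,  0;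
        1,  0,  0,  0,  0,  0,  0,  0,  0,  0,  0,  0,  0,  0,  0,  0;
        0,  0,  0,  0,  0,  0,  0,  0,  0,  0,  0,  0,  0,  0,  0,  0;
        0,  0, -1,  0,  0,  0,  0,  0,  0,  0,  0,  0,  0,  0,  0,  0;
        0,  1,  0,  0,  0,  0,  0,  0,  0,  0,  0,  0,  0,  0,  0,  0;
        0,  0,  2,  0,  0,  0,  0,  0,  0,  0,  0,  0,  0,  0,  0,  0;
        0,  0,  0,  0,  0, -1,  0,  0,  0,  0,  0,  0,  0,  0,  0,  0;
        0,  0,  0,  1,  0,  2,  0,  0,  0,  0,  0,  0,  0,  0,  0,  0;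
        0,  0,  0,  0,  1,  0,  0,  0,  0,  0,  0,  0,  0,  0,  0,  0;
        0,  0,  0,  0,  0,  0,  0,  0, -1,  0,  0,  0,  0,  0,  0,  0;
        0,  0,  0,  0,  0,  0,  1,  0,  0,  0,  0,  0,  0,  0,  0,  0;
        0,  0,  0,  0,  0,  0,  0,  1,  4,  0,  0,  0,  0,  0,  0,  0;
        0,  0,  0,  0,  0,  0,  0,  0,  0,  2,  0,  7,  0,  0,  0,  0;
        0,  0,  0,  0,  0,  0,  0,  0,  0,  0,  1,  0,  2,  0,  0,  0;
        0,  0,  0,  0,  0,  0,  0,  0,  0,  0,  0,  0,  0,  1,  0,  0],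
    !![ 0,  0,  0,  0,  0,  0,  0,  0,  0,  0,  0,  0,  0,  0,  0,  0;
        0,  0,  0,  0,  0,  0,  0,  0,  0,  0,  0,  0,  0,  0,  0,  0;
        0,  0,  0,  0,  0,  0,  0,  0,  0,  0,  0,  0,  0,  0,  0,  0;
        1,  0,  0,  0,  0,  0,  0,  0,  0,  0,  0,  0,  0,  0,  0,  0;
        0,  0,  0,  0,  0,  0,  0,  0,  0,  0,  0,  0,  0,  0,  0,  0;
        0,  0,  0,  0,  0,  0,  0,  0,  0,  0,  0,  0,  0,  0,  0,  0;
        0,  1,  0,  0,  0,  0,  0,  0,  0,  0,  0,  0,  0,  0,  0,  0;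
        0,  0,  0,  0,  0,  0,  0,  0,  0,  0,  0,  0,  0,  0,  0,  0;
        0,  0,  1,  0,  0,  0,  0,  0,  0,  0,  0,  0,  0,  0,  0,  0;
        0,  0,  0,  2,  0,  0,  0,  0,  0,  0,  0,  0,  0,  0,  0,  0;
        0,  0,  0,  0,  1,  0,  0,  0,  0,  0,  0,  0,  0,  0,  0,  0;
        0,  0,  0,  0,  0,  1,  0,  0,  0,  0,  0,  0,  0,  0,  0,  0;
        0,  0,  0,  0,  0,  0,  2,  0,  0,  0,  0,  0,  0,  0,  0,  0;
        0,  0,  0,  0,  0,  0,  0,  1,  4,  0,  0,  0,  0,  0,  0,  0;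
        0,  0,  0,  0,  0,  0,  0,  0,  0,  1,  0,  4,  0,  0,  0,  0;
        0,  0,  0,  0,  0,  0,  0,  0,  0,  0,  0,  0,  1,  0,  0,  0],
    !![ 0,  0,  0,  0,  0,  0,  0,  0,  0,  0,  0,  0,  0,  0,  0,  0;
        0,  0,  0,  0,  0,  0,  0,  0,  0,  0,  0,  0,  0,  0,  0,  0;
        0,  0,  0,  0,  0,  0,  0,  0,  0,  0,  0,  0,  0,  0,  0,  0;
        0,  0,  0,  0,  0,  0,  0,  0,  0,  0,  0,  0,  0,  0,  0,  0;
        1,  0,  0,  0,  0,  0,  0,  0,  0,  0,  0,  0,  0,  0,  0,  0;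
        0,  0,  0,  0,  0,  0,  0,  0,  0,  0,  0,  0,  0,  0,  0,  0;
        0,  0,  0,  0,  0,  0,  0,  0,  0,  0,  0,  0,  0,  0,  0,  0;
        0,  1,  0,  0,  0,  0,  0,  0,  0,  0,  0,  0,  0,  0,  0,  0;
        0,  0,  0,  0,  0,  0,  0,  0,  0,  0,  0,  0,  0,  0,  0,  0;
        0,  0,  1,  0,  0,  0,  0,  0,  0,  0,  0,  0,  0,  0,  0,  0;
        0,  0,  0,  1,  0,  0,  0,  0,  0,  0,  0,  0,  0,  0,  0,  0;
        0,  0,  0,  0,  0,  0,  0,  0,  0,  0,  0,  0,  0,  0,  0,  0;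
        0,  0,  0,  0,  0,  1,  0,  0,  0,  0,  0,  0,  0,  0,  0,  0;
        0,  0,  0,  0,  0,  0,  1,  0,  0,  0,  0,  0,  0,  0,  0,  0;
        0,  0,  0,  0,  0,  0,  0,  0,  1,  0,  0,  0,  0,  0,  0,  0;
        0,  0,  0,  0,  0,  0,  0,  0,  0,  0,  0,  1,  0,  0,  0,  0]]

section Spanning

local notation:max "e" i:max => Ideal.Quotient.mk ogrIdeal (X i)

theorem mk_ogrIdeal_relations :
    e 1 - e 0 * e 0 = 0 ∧ e 3 - e 0 * e 2 + e 1 * e 1 - e 2 * e 0 = 0 ∧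
      e 1 * e 3 - e 2 * e 2 + e 3 * e 1 = 0 ∧ e 3 * e 3 = 0 := by
  simp only [← map_mul, ← map_sub, ← map_add, Ideal.Quotient.eq_zero_iff_mem]
  refine ⟨?_, ?_, ?_, ?_⟩ <;> exact Ideal.subset_span (by simp)

set_option maxHeartbeats 1000000 in
theorem mk_X_mul_ogrMonomial (i : Fin 4) (k : Fin 16) :
    Ideal.Quotient.mk ogrIdeal (X i * ogrMonomial k) =
      ∑ j, mulMatrix i j k • Ideal.Quotient.mk ogrIdeal (ogrMonomial j) := by
  obtain ⟨h₁, h₂, h₃, h₄⟩ := mk_ogrIdeal_relations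
  fin_cases i <;> fin_cases k <;> simp [Fin.sum_univ_succ, mulMatrix, ogrMonomial] <;> grind

end Spanning

section Representation

theorem mulMatrix_zero_mul_two : mulMatrix 0 * mulMatrix 2 = mulMatrix 2 * mulMatrix 0 := by
  decide +kernel

theorem mulMatrix_relations :
    mulMatrix 1 - mulMatrix 0 * mulMatrix 0 = 0 ∧
      mulMatrix 3 - mulMatrix 0 * mulMatrix 2 + mulMatrix 1 * mulMatrix 1
        - mulMatrix 2 * mulMatrix 0 = 0 ∧
      mulMatrix 1 * mulMatrix 3 - mulMatrix 2 * mulMatrix 2 + mulMatrix 3 * mulMatrix 1 = 0 ∧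
      mulMatrix 3 * mulMatrix 3 = 0 := by
  decide +kernel

abbrev mulMatrixAlgebra : Subalgebra ℤ (Matrix (Fin 16) (Fin 16) ℤ) :=
  Algebra.adjoin ℤ {mulMatrix 0, mulMatrix 2}

open scoped IsMulCommutative

instance : IsMulCommutative mulMatrixAlgebra :=
  Algebra.isMulCommutative_adjoin ℤ <| by
    simp only [Set.mem_insert_iff, Set.mem_singleton_iff]
    rintro a (rfl | rfl) b (rfl | rfl) <;> simp [mulMatrix_zero_mul_two]

theorem mulMatrix_mem (i : Fin 4) : mulMatrix i ∈ mulMatrixAlgebra := by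
  obtain ⟨h₁, h₂, -, -⟩ := mulMatrix_relations
  have h0 : mulMatrix 0 ∈ mulMatrixAlgebra := Algebra.subset_adjoin (by simp)
  have h2 : mulMatrix 2 ∈ mulMatrixAlgebra := Algebra.subset_adjoin (by simp)
  have h1 : mulMatrix 1 ∈ mulMatrixAlgebra := by
    rw [sub_eq_zero.mp h₁]; exact mul_mem h0 h0
  have h3 : mulMatrix 3 ∈ mulMatrixAlgebra := by
    rw [show mulMatrix 3 = mulMatrix 0 * mulMatrix 2 - mulMatrix 1 * mulMatrix 1
        + mulMatrix 2 * mulMatrix 0 by rw [← sub_eq_zero, ← h₂]; abel]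
    exact add_mem (sub_mem (mul_mem h0 h2) (mul_mem h1 h1)) (mul_mem h2 h0)
  fin_cases i <;> assumption

noncomputable def ogrEval : MvPolynomial (Fin 4) ℤ →ₐ[ℤ] mulMatrixAlgebra :=
  aeval fun i => ⟨mulMatrix i, mulMatrix_mem i⟩

theorem ogrIdeal_le_ker_ogrEval : ogrIdeal ≤ RingHom.ker ogrEval := by
  obtain ⟨h₁, h₂, h₃, h₄⟩ := mulMatrix_relations
  rw [ogrIdeal, Ideal.span_le]
  simp only [Set.insert_subset_iff, Set.singleton_subset_iff, SetLike.mem_coe, RingHom.mem_ker]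
  refine ⟨?_, ?_, ?_, ?_⟩ <;> ext1 <;> simpa [ogrEval]

noncomputable def ogrRep : 𝓡 →ₐ[ℤ] mulMatrixAlgebra :=
  Ideal.Quotient.liftₐ ogrIdeal ogrEval ogrIdeal_le_ker_ogrEval

noncomputable def ogrCoords : 𝓡 →ₗ[ℤ] Fin 16 → ℤ where
  toFun r := Matrix.mulVec (ogrRep r : Matrix (Fin 16) (Fin 16) ℤ) (Pi.single 0 1)
  map_add' r s := by simp only [map_add, Subalgebra.coe_add, Matrix.add_mulVec]
  map_smul' n r := by
    simp only [map_zsmul, Subalgebra.coe_smul, Matrix.smul_mulVec, RingHom.id_apply]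

theorem ogrCoords_mk_ogrMonomial (k : Fin 16) :
    ogrCoords (Ideal.Quotient.mk ogrIdeal (ogrMonomial k)) = Pi.single k 1 := by
  change Matrix.mulVec (ogrEval (ogrMonomial k) : Matrix (Fin 16) (Fin 16) ℤ) _ = _
  fin_cases k <;> simp [ogrEval, ogrMonomial] <;> decide +kernel

end Representation

/-- In `R = ℤ[e₁,e₂,e₃,e₄]/(relations)` the sixteen square-free monomials
`e_{i₁} ⋯ e_{i_r}`, `1 ≤ i₁ < ⋯ < i_r ≤ 4` (including `1`), form a `ℤ`-basis. -/
theorem stmt_13 :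
    ∃ b : Module.Basis (Fin 16) ℤ (MvPolynomial (Fin 4) ℤ ⧸ ogrIdeal),
      ∀ i : Fin 16, b i = Ideal.Quotient.mk ogrIdeal
        (![1, X 0, X 1, X 2, X 3,
           X 0 * X 1, X 0 * X 2, X 0 * X 3, X 1 * X 2, X 1 * X 3, X 2 * X 3,
           X 0 * X 1 * X 2, X 0 * X 1 * X 3, X 0 * X 2 * X 3, X 1 * X 2 * X 3,
           X 0 * X 1 * X 2 * X 3] i) := by
  set m : Fin 16 → 𝓡 := fun k => Ideal.Quotient.mk ogrIdeal (ogrMonomial k)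
  have hli : LinearIndependent ℤ m := by
    refine LinearIndependent.of_comp ogrCoords ?_
    have h : ogrCoords ∘ m = fun k => Pi.single k 1 := funext ogrCoords_mk_ogrMonomial
    rw [h]
    exact Pi.linearIndependent_single_one (Fin 16) ℤ
  have hspan : Submodule.span ℤ (Set.range m) = ⊤ := by
    refine Submodule.span_range_eq_top_of_mul_mem
      (adjoin_range_comp_X_eq_top (Ideal.Quotient.mkₐ_surjective ℤ ogrIdeal))
      (Submodule.subset_span ⟨0, map_one _⟩) ?_
    rintro _ ⟨i, rfl⟩ k
    rw [Function.comp_apply, Ideal.Quotient.mkₐ_eq_mk, ← map_mul, mk_X_mul_ogrMonomial]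
    exact Submodule.sum_mem _ fun j _ => Submodule.smul_mem _ _ (Submodule.subset_span ⟨j, rfl⟩)
  exact ⟨Module.Basis.mk hli hspan.ge, fun i => Module.Basis.mk_apply hli hspan.ge i⟩
end
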